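/- Let γ, p ∈ ℝ satisfy 0 ≤ γ + 2p < 1, let k* > 0, and let W : ℝ → ℝ be measurable with |W(ξ)| ≤ C₀·e^{(γ/2+p)|ξ|} for all ξ ∈ ℝ. For m, n ∈ ℤ define J_{m,n} = ∫_{−∞}^0 ∫_{log(1−e^Y)}^{∞} e^{(Y−Z)/2} W(Y−Z) e^{i m k* Y} e^{i n k* Z} dZ dY. Then there exists a constant C, depending only on γ, p, k* and C₀, such that |J_{m,n}| ≤ C for all m, n ∈ ℤ. -/

import Mathlib

open MeasureTheory Real Set

namespace Stmt12Aux

open Filter Topology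

noncomputable def Lf (Y : ℝ) : ℝ := Real.log (1 - Real.exp Y)

noncomputable def h0 (b c Y : ℝ) : ℝ :=
  Real.exp (b * (Y - Lf Y)) / b + Real.exp (c * (Y - Lf Y)) * max (Y - Lf Y) 0

lemma h0_nonneg {b : ℝ} (hb : 0 < b) (c Y : ℝ) : 0 ≤ h0 b c Y := by
  unfold h0
  have := Real.exp_pos (b * (Y - Lf Y))
  have := Real.exp_pos (c * (Y - Lf Y))
  have : (0:ℝ) ≤ max (Y - Lf Y) 0 := le_max_right _ _
  positivity

lemma h0_contOn (b c : ℝ) : ContinuousOn (h0 b c) (Iio 0) := by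
  have hL : ContinuousOn Lf (Iio 0) := by
    apply ContinuousOn.log
    · exact (continuous_const.sub Real.continuous_exp).continuousOn
    · intro x hx
      have : Real.exp x < 1 := by
        rw [← Real.exp_zero]; exact Real.exp_lt_exp.2 hx
      linarith
  have hYL : ContinuousOn (fun Y => Y - Lf Y) (Iio 0) := continuousOn_id.sub hL
  exact (((hYL.const_smul b).rexp.div_const b).add
    ((hYL.const_smul c).rexp.mul (hYL.sup continuousOn_const)))

lemma exp_mul_integrableOn_Iic {b : ℝ} (hb : 0 < b) (c : ℝ) :
    IntegrableOn (fun Y : ℝ => Real.exp (b * Y)) (Iic c) := by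
  have h1 : IntegrableOn (fun x : ℝ => Real.exp (b * (-x))) (Ici (-c)) := by
    rw [integrableOn_Ici_iff_integrableOn_Ioi]
    simpa [mul_comm, neg_mul, mul_neg] using exp_neg_integrableOn_Ioi (-c) hb
  refine (MeasurePreserving.integrableOn_comp_preimage
      (Measure.measurePreserving_neg (volume : Measure ℝ))
      (Homeomorph.neg ℝ).measurableEmbedding
      (f := fun Y : ℝ => Real.exp (b * Y)) (s := Iic c)).1 ?_
  simpa [Function.comp_def, neg_preimage, neg_Iic] using h1

lemma integrableOn_h0_left {b : ℝ} (hb : 0 < b) (hb1 : b < 1) (c : ℝ) :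
    IntegrableOn (h0 b c) (Iic (-Real.log 2)) := by
  have hlog2 : (0:ℝ) < Real.log 2 := Real.log_pos one_lt_two
  apply Integrable.mono' ((exp_mul_integrableOn_Iic hb (-Real.log 2)).mul_const (2 / b))
  · exact ((h0_contOn b c).mono (Iic_subset_Iio.mpr (by linarith))).aestronglyMeasurable
      measurableSet_Iic
  · refine (ae_restrict_iff' measurableSet_Iic).2 (ae_of_all _ fun Y hY => ?_)
    have hY' : Y ≤ -Real.log 2 := hY
    have hY0 : Y < 0 := lt_of_le_of_lt hY' (by linarith)
    have heY : Real.exp Y ≤ 2⁻¹ := by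
      calc Real.exp Y ≤ Real.exp (-Real.log 2) := Real.exp_le_exp.2 hY'
        _ = 2⁻¹ := by rw [Real.exp_neg, Real.exp_log]; norm_num
    have ht : (2:ℝ)⁻¹ ≤ 1 - Real.exp Y := by linarith
    have hL : -Real.log 2 ≤ Lf Y := by
      have := (Real.log_le_log_iff (by norm_num) (by linarith)).2 ht
      simpa [Lf, Real.log_inv] using this
    have hYL : Y - Lf Y ≤ 0 := by linarith
    have hmax : max (Y - Lf Y) 0 = 0 := max_eq_right hYL
    have hexp : Real.exp (b * (Y - Lf Y)) ≤ Real.exp (b * Y) * 2 := by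
      rw [show Real.exp (b*Y) * 2 = Real.exp (b*Y + Real.log 2) by
        rw [Real.exp_add, Real.exp_log]; norm_num]
      apply Real.exp_le_exp.2
      nlinarith
    rw [Real.norm_of_nonneg (h0_nonneg hb c Y)]
    unfold h0
    rw [hmax, mul_zero, add_zero, div_le_iff₀ hb]
    calc Real.exp (b * (Y - Lf Y)) ≤ Real.exp (b*Y) * 2 := hexp
      _ = Real.exp (b*Y) * (2 / b) * b := by field_simp

lemma neg_rpow_integrableOn {r l : ℝ} (hr : -1 < r) (hl : 0 ≤ l) :
    IntegrableOn (fun Y : ℝ => (-Y) ^ r) (Ioo (-l) 0) := by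
  have h1 : IntegrableOn (fun x : ℝ => x ^ r) (Ioo 0 l) := by
    rw [← intervalIntegrable_iff_integrableOn_Ioo_of_le hl]
    exact intervalIntegral.intervalIntegrable_rpow' hr
  have h2 := (MeasurePreserving.integrableOn_comp_preimage
      (Measure.measurePreserving_neg (volume : Measure ℝ))
      (Homeomorph.neg ℝ).measurableEmbedding).2 h1
  simpa [Function.comp_def, neg_preimage, neg_Ioo, neg_zero] using h2

lemma t_lower {Y : ℝ} (hY0 : Y < 0) (hYl : -Real.log 2 < Y) :
    -Y / 2 ≤ 1 - Real.exp Y := by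
  have e1 : Real.exp (-Y) * Real.exp Y = 1 := by rw [← Real.exp_add]; simp
  have e2 : -Y + 1 ≤ Real.exp (-Y) := Real.add_one_le_exp (-Y)
  have e3 : (2:ℝ)⁻¹ ≤ Real.exp Y := by
    calc (2:ℝ)⁻¹ = Real.exp (-Real.log 2) := by
          rw [Real.exp_neg, Real.exp_log]; norm_num
      _ ≤ Real.exp Y := Real.exp_le_exp.2 hYl.le
  nlinarith [Real.exp_pos Y]

lemma rpow_half_bound {Y r : ℝ} (hY0 : Y < 0) (hr0 : 0 ≤ r) (hr1 : r ≤ 1) :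
    (-Y / 2) ^ (-r) ≤ 2 * (-Y) ^ (-r) := by
  have hmY : (0:ℝ) < -Y := by linarith
  have h1 : (-Y / 2 : ℝ) = (-Y) * 2⁻¹ := by ring
  rw [h1, Real.mul_rpow hmY.le (by norm_num), Real.inv_rpow (by norm_num : (0:ℝ) ≤ 2),
    Real.rpow_neg (by norm_num : (0:ℝ) ≤ 2), inv_inv]
  have h2 : (2:ℝ) ^ r ≤ 2 := by
    calc (2:ℝ) ^ r ≤ (2:ℝ) ^ (1:ℝ) := Real.rpow_le_rpow_of_exponent_le one_le_two hr1
      _ = 2 := Real.rpow_one 2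
  have h3 : (0:ℝ) ≤ (-Y) ^ (-r) := Real.rpow_nonneg hmY.le _
  calc (-Y) ^ (-r) * 2 ^ r ≤ (-Y) ^ (-r) * 2 := by nlinarith
    _ = 2 * (-Y) ^ (-r) := by ring

lemma integrableOn_h0_right {b c : ℝ} (hb : 0 < b) (hb1 : b < 1) (hc0 : 0 ≤ c) (hc1 : c < 1) :
    IntegrableOn (h0 b c) (Ioo (-Real.log 2) 0) := by
  set ε := (1 - c) / 2 with hεdef
  have hε : 0 < ε := by simp only [hεdef]; linarith
  have hε1 : ε ≤ 1 := by simp only [hεdef]; linarith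
  have hlog2 : (0:ℝ) < Real.log 2 := Real.log_pos one_lt_two
  have hint : IntegrableOn (fun Y : ℝ => (-Y) ^ (-b) * (2 / b) + (-Y) ^ (-(c + ε)) * (4 / ε))
      (Ioo (-Real.log 2) 0) := by
    apply Integrable.add
    · exact (neg_rpow_integrableOn (by linarith) hlog2.le).mul_const _
    · refine (neg_rpow_integrableOn ?_ hlog2.le).mul_const _
      simp only [hεdef]; linarith
  apply Integrable.mono' hint
  · exact ((h0_contOn b c).mono Ioo_subset_Iio_self).aestronglyMeasurable measurableSet_Ioo
  · refine (ae_restrict_iff' measurableSet_Ioo).2 (ae_of_all _ fun Y hY => ?_)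
    obtain ⟨hYl, hY0⟩ := hY
    have hmY : (0:ℝ) < -Y := by linarith
    set t := 1 - Real.exp Y with htdef
    have ht2 : -Y / 2 ≤ t := t_lower hY0 hYl
    have ht0 : 0 < t := lt_of_lt_of_le (by linarith) ht2
    have ht1 : t ≤ 1 := by simp only [htdef]; nlinarith [Real.exp_pos Y]
    have hLY : Lf Y = Real.log t := rfl
    have key : ∀ r : ℝ, 0 ≤ r → r ≤ 1 → Real.exp (r * (Y - Lf Y)) ≤ 2 * (-Y) ^ (-r) := by
      intro r hr0 hr1
      have h1 : Real.exp (r * (Y - Lf Y)) = Real.exp (r * Y) * Real.exp (-(r * Real.log t)) := by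
        rw [← Real.exp_add, hLY]; ring_nf
      have h2 : Real.exp (r * Y) ≤ 1 := Real.exp_le_one_iff.2 (by nlinarith)
      have h3 : Real.exp (-(r * Real.log t)) = t ^ (-r) := by
        rw [Real.rpow_def_of_pos ht0]; ring_nf
      have h4 : t ^ (-r) ≤ (-Y / 2) ^ (-r) :=
        Real.rpow_le_rpow_of_nonpos (by linarith) ht2 (by linarith)
      have h6 : (0:ℝ) < Real.exp (-(r * Real.log t)) := Real.exp_pos _
      calc Real.exp (r * (Y - Lf Y)) = Real.exp (r * Y) * Real.exp (-(r * Real.log t)) := h1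
        _ ≤ 1 * Real.exp (-(r * Real.log t)) := by nlinarith
        _ = t ^ (-r) := by rw [one_mul, h3]
        _ ≤ (-Y / 2) ^ (-r) := h4
        _ ≤ 2 * (-Y) ^ (-r) := rpow_half_bound hY0 hr0 hr1
    have hmax : max (Y - Lf Y) 0 ≤ (2 / ε) * (-Y) ^ (-ε) := by
      have hLle : Lf Y ≤ 0 := by rw [hLY]; exact Real.log_nonpos ht0.le ht1
      have hstep1 : max (Y - Lf Y) 0 ≤ -Lf Y := max_le (by linarith) (by linarith)
      have hu : (0:ℝ) < -Y / 2 := by linarith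
      have hstep2 : -Lf Y ≤ Real.log ((-Y / 2)⁻¹) := by
        rw [hLY, Real.log_inv]
        have := (Real.log_le_log_iff hu ht0).2 ht2
        linarith
      have hup : (0:ℝ) < (-Y / 2)⁻¹ := by positivity
      have hstep3 : Real.log ((-Y / 2)⁻¹) ≤ ((-Y / 2)⁻¹) ^ ε / ε := by
        have h7 := Real.log_le_sub_one_of_pos (Real.rpow_pos_of_pos hup ε)
        rw [Real.log_rpow hup] at h7
        rw [le_div_iff₀ hε]
        nlinarith [Real.rpow_pos_of_pos hup ε]
      have hstep4 : ((-Y / 2)⁻¹) ^ ε = (-Y / 2) ^ (-ε) := by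
        rw [Real.inv_rpow hu.le, ← Real.rpow_neg hu.le]
      calc max (Y - Lf Y) 0 ≤ -Lf Y := hstep1
        _ ≤ Real.log ((-Y / 2)⁻¹) := hstep2
        _ ≤ ((-Y / 2)⁻¹) ^ ε / ε := hstep3
        _ = (-Y / 2) ^ (-ε) / ε := by rw [hstep4]
        _ ≤ 2 * (-Y) ^ (-ε) / ε := by gcongr; exact rpow_half_bound hY0 hε.le hε1
        _ = (2 / ε) * (-Y) ^ (-ε) := by ring
    rw [Real.norm_of_nonneg (h0_nonneg hb c Y)]
    unfold h0
    have hterm1 : Real.exp (b * (Y - Lf Y)) / b ≤ (-Y) ^ (-b) * (2 / b) := by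
      rw [div_le_iff₀ hb]
      calc Real.exp (b * (Y - Lf Y)) ≤ 2 * (-Y) ^ (-b) := key b hb.le hb1.le
        _ = (-Y) ^ (-b) * (2 / b) * b := by field_simp
    have hterm2 : Real.exp (c * (Y - Lf Y)) * max (Y - Lf Y) 0 ≤ (-Y) ^ (-(c + ε)) * (4 / ε) := by
      have h8 : (0:ℝ) ≤ max (Y - Lf Y) 0 := le_max_right _ _
      have h9 : (0:ℝ) ≤ 2 * (-Y) ^ (-c) := by positivity
      calc Real.exp (c * (Y - Lf Y)) * max (Y - Lf Y) 0
          ≤ (2 * (-Y) ^ (-c)) * ((2 / ε) * (-Y) ^ (-ε)) :=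
            mul_le_mul (key c hc0 hc1.le) hmax h8 h9
        _ = (4 / ε) * ((-Y) ^ (-c) * (-Y) ^ (-ε)) := by ring
        _ = (4 / ε) * (-Y) ^ (-(c + ε)) := by
            rw [← Real.rpow_add hmY, neg_add]
        _ = (-Y) ^ (-(c + ε)) * (4 / ε) := by ring
    exact add_le_add hterm1 hterm2

lemma integrableOn_h0 {b c : ℝ} (hb : 0 < b) (hb1 : b < 1) (hc0 : 0 ≤ c) (hc1 : c < 1) :
    IntegrableOn (h0 b c) (Iio 0) := by
  have hlog2 : (0:ℝ) < Real.log 2 := Real.log_pos one_lt_two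
  have hsplit : Iio (0:ℝ) = Iic (-Real.log 2) ∪ Ioo (-Real.log 2) 0 := by
    ext x; simp only [mem_Iio, mem_union, mem_Iic, mem_Ioo]
    constructor
    · intro hx; rcases le_or_gt x (-Real.log 2) with h | h
      · exact Or.inl h
      · exact Or.inr ⟨h, hx⟩
    · rintro (h | h)
      · linarith
      · exact h.2
  rw [hsplit]
  exact (integrableOn_h0_left hb hb1 c).union (integrableOn_h0_right hb hb1 hc0 hc1)

lemma inner_integrable {b : ℝ} (hb : 0 < b) (c L Y : ℝ) :
    IntegrableOn (fun Z => Real.exp (-(b * (Z - Y))) +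
      (Ioo L Y).indicator (fun _ => Real.exp (c * (Y - L))) Z) (Ioi L) := by
  apply Integrable.add
  · have h : (fun Z : ℝ => Real.exp (-(b * (Z - Y)))) =
        fun Z => Real.exp (b * Y) * Real.exp (-(b * Z)) := by
      funext Z; rw [← Real.exp_add]; ring_nf
    rw [h]
    have h2 : IntegrableOn (fun Z : ℝ => Real.exp (-(b * Z))) (Ioi L) := by
      simpa [neg_mul] using exp_neg_integrableOn_Ioi L hb
    exact h2.const_mul _
  · exact ((integrable_indicator_iff measurableSet_Ioo).2
      (integrableOn_const measure_Ioo_lt_top.ne)).integrableOn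

open Filter in
lemma integral_exp_neg_mul_Ioi' {b : ℝ} (hb : 0 < b) (L : ℝ) :
    ∫ Z in Ioi L, Real.exp (-(b * Z)) = Real.exp (-(b * L)) / b := by
  have hderiv : ∀ x : ℝ, HasDerivAt (fun Z => -Real.exp (-(b * Z)) / b)
      (Real.exp (-(b * x))) x := by
    intro x
    have h1 : HasDerivAt (fun Z : ℝ => -(b * Z)) (-b) x := by
      simpa using (hasDerivAt_neg' x).const_mul b
    have h2 := h1.exp.neg.div_const b
    rw [mul_neg, neg_neg, mul_div_assoc, div_self hb.ne', mul_one] at h2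
    exact h2
  have hint : IntegrableOn (fun x => Real.exp (-(b * x))) (Ioi L) := by
    simpa [neg_mul] using exp_neg_integrableOn_Ioi L hb
  have htend : Tendsto (fun Z => -Real.exp (-(b * Z)) / b) atTop (𝓝 0) := by
    have h3 : Tendsto (fun Z : ℝ => -(b * Z)) atTop atBot :=
      tendsto_neg_atBot_iff.mpr ((tendsto_const_mul_atTop_of_pos hb).2 tendsto_id)
    have := ((Real.tendsto_exp_atBot.comp h3).neg).div_const b
    simpa using this
  have := integral_Ioi_of_hasDerivAt_of_tendsto
    ((hderiv L).continuousAt.continuousWithinAt) (fun x _ => hderiv x) hint htend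
  rw [this]; ring

lemma inner_integral_eq {b : ℝ} (hb : 0 < b) (c L Y : ℝ) :
    (∫ Z in Ioi L, (Real.exp (-(b * (Z - Y))) +
        (Ioo L Y).indicator (fun _ => Real.exp (c * (Y - L))) Z))
      = Real.exp (b * (Y - L)) / b + Real.exp (c * (Y - L)) * max (Y - L) 0 := by
  have h : (fun Z : ℝ => Real.exp (-(b * (Z - Y)))) =
      fun Z => Real.exp (b * Y) * Real.exp (-(b * Z)) := by
    funext Z; rw [← Real.exp_add]; ring_nf
  have int1 : IntegrableOn (fun Z : ℝ => Real.exp (-(b * (Z - Y)))) (Ioi L) := by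
    rw [h]
    have h2 : IntegrableOn (fun Z : ℝ => Real.exp (-(b * Z))) (Ioi L) := by
      simpa [neg_mul] using exp_neg_integrableOn_Ioi L hb
    exact h2.const_mul _
  have int2 : IntegrableOn ((Ioo L Y).indicator (fun _ => Real.exp (c * (Y - L)))) (Ioi L) :=
    ((integrable_indicator_iff measurableSet_Ioo).2
      (integrableOn_const measure_Ioo_lt_top.ne)).integrableOn
  rw [integral_add int1 int2]
  congr 1
  · rw [h, integral_const_mul, integral_exp_neg_mul_Ioi' hb]
    rw [eq_div_iff hb.ne']
    rw [show Real.exp (b*Y) * (Real.exp (-(b * L)) / b) * b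
        = Real.exp (b*Y) * Real.exp (-(b * L)) * (b / b) by ring, div_self hb.ne', mul_one,
      ← Real.exp_add, show b * Y + -(b * L) = b * (Y - L) by ring]
  · rw [integral_indicator measurableSet_Ioo, Measure.restrict_restrict measurableSet_Ioo,
      inter_eq_self_of_subset_left Ioo_subset_Ioi_self, setIntegral_const,
      Real.volume_real_Ioo, smul_eq_mul, mul_comm]

lemma pointwise_bound {a b c Y Z L : ℝ} (ha0 : 0 ≤ a) (hb : b = 1/2 - a) (hc : c = 1/2 + a)
    (hLZ : L < Z) :
    Real.exp ((Y - Z)/2) * Real.exp (a * |Y - Z|) ≤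
      Real.exp (-(b * (Z - Y))) + (Ioo L Y).indicator (fun _ => Real.exp (c * (Y - L))) Z := by
  rw [← Real.exp_add]
  have hc0 : 0 ≤ c := by rw [hc]; linarith
  rcases le_or_gt Y Z with h | h
  · have habs : |Y - Z| = -(Y - Z) := abs_of_nonpos (by linarith)
    have heq : (Y - Z)/2 + a * |Y - Z| = -(b * (Z - Y)) := by rw [habs, hb]; ring
    rw [heq]
    exact le_add_of_nonneg_right (Set.indicator_nonneg (fun _ _ => (Real.exp_pos _).le) _)
  · have habs : |Y - Z| = Y - Z := abs_of_nonneg (by linarith)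
    have h2 : (Y - Z)/2 + a * |Y - Z| = c * (Y - Z) := by rw [habs, hc]; ring
    have hmem : Z ∈ Ioo L Y := ⟨hLZ, h⟩
    rw [h2, Set.indicator_of_mem hmem]
    have h3 : Real.exp (c * (Y - Z)) ≤ Real.exp (c * (Y - L)) := by
      apply Real.exp_le_exp.2; nlinarith
    linarith [(Real.exp_pos (-(b * (Z - Y)))).le]

end Stmt12Aux

/-- The interaction coefficients
`J_{m,n} = ∫_{−∞}^0 ∫_{log(1−e^Y)}^{∞} e^{(Y−Z)/2} W(Y−Z) e^{imk*Y} e^{ink*Z} dZ dY`. -/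
noncomputable def coagJmn (W : ℝ → ℝ) (k : ℝ) (m n : ℤ) : ℂ :=
  ∫ Y in Set.Iio (0 : ℝ), ∫ Z in Set.Ioi (Real.log (1 - Real.exp Y)),
    ((Real.exp ((Y - Z) / 2) * W (Y - Z) : ℝ) : ℂ) *
      Complex.exp (Complex.I * (((m : ℝ) * k : ℝ) : ℂ) * (Y : ℂ)) *
      Complex.exp (Complex.I * (((n : ℝ) * k : ℝ) : ℂ) * (Z : ℂ))

/-- for `0 ≤ γ+2p < 1`, `k* > 0`, there is a constant `C`
(depending only on `γ,p,k*,C₀`) such that `|J_{m,n}| ≤ C` for all `m,n ∈ ℤ` and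
all measurable `W` with `|W(ξ)| ≤ C₀ e^{(γ/2+p)|ξ|}`. -/
theorem stmt_12 (γ p : ℝ) (h0 : 0 ≤ γ + 2 * p) (h1 : γ + 2 * p < 1)
    (kstar : ℝ) (hk : 0 < kstar) (C₀ : ℝ) :
    ∃ C : ℝ, ∀ W : ℝ → ℝ, Measurable W →
      (∀ ξ : ℝ, |W ξ| ≤ C₀ * Real.exp ((γ / 2 + p) * |ξ|)) →
      ∀ m n : ℤ, ‖coagJmn W kstar m n‖ ≤ C := by
  classical
  set a := γ / 2 + p with hadef
  have ha0 : 0 ≤ a := by rw [hadef]; linarith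
  have ha1 : a < 1/2 := by rw [hadef]; linarith
  set b := 1/2 - a with hbdef
  set c := 1/2 + a with hcdef
  have hb : 0 < b := by rw [hbdef]; linarith
  have hb1 : b < 1 := by rw [hbdef]; linarith
  have hc0 : 0 ≤ c := by rw [hcdef]; linarith
  have hc1 : c < 1 := by rw [hcdef]; linarith
  refine ⟨max C₀ 0 * ∫ Y in Set.Iio (0:ℝ), Stmt12Aux.h0 b c Y, ?_⟩
  intro W hW hWb m n
  have hC₀ : 0 ≤ C₀ := le_trans (abs_nonneg (W 0)) (by simpa using hWb 0)
  rw [max_eq_left hC₀]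
  rw [coagJmn]
  calc ‖∫ Y in Set.Iio (0 : ℝ), ∫ Z in Set.Ioi (Real.log (1 - Real.exp Y)),
        ((Real.exp ((Y - Z) / 2) * W (Y - Z) : ℝ) : ℂ) *
          Complex.exp (Complex.I * (((m : ℝ) * kstar : ℝ) : ℂ) * (Y : ℂ)) *
          Complex.exp (Complex.I * (((n : ℝ) * kstar : ℝ) : ℂ) * (Z : ℂ))‖
      ≤ ∫ Y in Set.Iio (0:ℝ), ‖∫ Z in Set.Ioi (Real.log (1 - Real.exp Y)),
        ((Real.exp ((Y - Z) / 2) * W (Y - Z) : ℝ) : ℂ) *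
          Complex.exp (Complex.I * (((m : ℝ) * kstar : ℝ) : ℂ) * (Y : ℂ)) *
          Complex.exp (Complex.I * (((n : ℝ) * kstar : ℝ) : ℂ) * (Z : ℂ))‖ :=
        norm_integral_le_integral_norm _
    _ ≤ ∫ Y in Set.Iio (0:ℝ), C₀ * Stmt12Aux.h0 b c Y := ?_
    _ = C₀ * ∫ Y in Set.Iio (0:ℝ), Stmt12Aux.h0 b c Y := integral_const_mul _ _
  refine integral_mono_of_nonneg (ae_of_all _ fun Y => norm_nonneg _)
    ((Stmt12Aux.integrableOn_h0 hb hb1 hc0 hc1).const_mul C₀)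
    ((ae_restrict_iff' measurableSet_Iio).2 (ae_of_all _ fun Y hY => ?_))
  set L := Real.log (1 - Real.exp Y) with hLdef
  have hLf : Stmt12Aux.Lf Y = L := rfl
  calc ‖∫ Z in Set.Ioi L,
        ((Real.exp ((Y - Z) / 2) * W (Y - Z) : ℝ) : ℂ) *
          Complex.exp (Complex.I * (((m : ℝ) * kstar : ℝ) : ℂ) * (Y : ℂ)) *
          Complex.exp (Complex.I * (((n : ℝ) * kstar : ℝ) : ℂ) * (Z : ℂ))‖
      ≤ ∫ Z in Set.Ioi L, ‖((Real.exp ((Y - Z) / 2) * W (Y - Z) : ℝ) : ℂ) *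
          Complex.exp (Complex.I * (((m : ℝ) * kstar : ℝ) : ℂ) * (Y : ℂ)) *
          Complex.exp (Complex.I * (((n : ℝ) * kstar : ℝ) : ℂ) * (Z : ℂ))‖ :=
        norm_integral_le_integral_norm _
    _ ≤ ∫ Z in Set.Ioi L, C₀ * (Real.exp (-(b * (Z - Y))) +
          (Set.Ioo L Y).indicator (fun _ => Real.exp (c * (Y - L))) Z) := ?_
    _ = C₀ * ∫ Z in Set.Ioi L, (Real.exp (-(b * (Z - Y))) +
          (Set.Ioo L Y).indicator (fun _ => Real.exp (c * (Y - L))) Z) := integral_const_mul _ _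
    _ = C₀ * Stmt12Aux.h0 b c Y := by
        rw [Stmt12Aux.inner_integral_eq hb c L Y, Stmt12Aux.h0, hLf]
  refine integral_mono_of_nonneg (ae_of_all _ fun Z => norm_nonneg _)
    ((Stmt12Aux.inner_integrable hb c L Y).const_mul C₀)
    ((ae_restrict_iff' measurableSet_Ioi).2 (ae_of_all _ fun Z hZ => ?_))
  have hZ' : L < Z := hZ
  have hnorm : ‖((Real.exp ((Y - Z) / 2) * W (Y - Z) : ℝ) : ℂ) *
      Complex.exp (Complex.I * (((m : ℝ) * kstar : ℝ) : ℂ) * (Y : ℂ)) *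
      Complex.exp (Complex.I * (((n : ℝ) * kstar : ℝ) : ℂ) * (Z : ℂ))‖
      = Real.exp ((Y - Z) / 2) * |W (Y - Z)| := by
    simp [map_mul, Complex.norm_real, Complex.norm_exp, Complex.mul_re, abs_mul,
      abs_of_pos (Real.exp_pos _)]
  beta_reduce
  rw [hnorm]
  calc Real.exp ((Y - Z) / 2) * |W (Y - Z)|
      ≤ Real.exp ((Y - Z) / 2) * (C₀ * Real.exp (a * |Y - Z|)) := by
        have := hWb (Y - Z)
        have h4 : (0:ℝ) < Real.exp ((Y - Z)/2) := Real.exp_pos _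
        rw [hadef] at *
        nlinarith [abs_nonneg (W (Y - Z))]
    _ = C₀ * (Real.exp ((Y - Z) / 2) * Real.exp (a * |Y - Z|)) := by ring
    _ ≤ C₀ * (Real.exp (-(b * (Z - Y))) +
          (Set.Ioo L Y).indicator (fun _ => Real.exp (c * (Y - L))) Z) := by
        have := Stmt12Aux.pointwise_bound (Y := Y) ha0 hbdef hcdef hZ'
        nlinarith [Real.exp_pos ((Y - Z)/2), Real.exp_pos (a * |Y - Z|)]
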